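/- Let a0, c, mu0, mu1 > 0 and b ∈ ℝ with 0 < a0 < 2c and a0 ≠ c. Set E = 3·a0²·mu1² − 2·a0·b·mu1 − 4·a0·mu0 − b² + 4·a0 and assume E·(a0 − c) > 0. Define σ = (4·a0² + 3·a0²·c·mu1² − 2·a0·b·c·mu1 − 4·a0·c·mu0 − b²·c)/(4·a0·(a0 − c)) and assume σ > 0. Define B = (a0·mu1 − b)/(2·a0), ω = −(a0·mu1² − b·mu1 − mu0 + σ)·mu1, λ = √(E/(16·a0·(a0 − c))), and d2 = 3·√(2c − a0)·E/(8·√a0·(a0 − c)). Then the synchronized pair f(ξ) = d2·sech²(λ·ξ) and g(ξ) = √(a0/(2c − a0))·f(ξ) satisfies the Schrödinger KdV–KdV associated ODE system with parameters a0, c, mu0, mu1, b, wave speed σ, and phase shifts B, ω. -/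

import Mathlib

/-!
With `S = sech²(λ·)` one has `S' = -2λ sinh/cosh³`, and `sinh² = cosh² - 1` turns `S''` into
the soliton relation `S'' = 4λ²S - 6λ²S²`; differentiating once more gives
`S''' = (4λ² - 12λ²S) S'`. For `f = d·S` and `g = k·f` every equation of the system therefore
splits into a multiple of `S S'` (or `S²`) and a multiple of `S'` (or `S`), and the parameters of
the theorem are exactly those making both coefficients vanish.
-/

open Real

noncomputable section

def sechSq (l x : ℝ) : ℝ := (1 / cosh (l * x)) ^ 2

lemma hasDerivAt_cosh_const_mul (l x : ℝ) :
    HasDerivAt (fun y => cosh (l * y)) (l * sinh (l * x)) x := by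
  simpa [mul_comm] using ((hasDerivAt_id' x).const_mul l).cosh

lemma hasDerivAt_sinh_const_mul (l x : ℝ) :
    HasDerivAt (fun y => sinh (l * y)) (l * cosh (l * x)) x := by
  simpa [mul_comm] using ((hasDerivAt_id' x).const_mul l).sinh

namespace sechSq

variable (l : ℝ)

lemma hasDerivAt (x : ℝ) :
    HasDerivAt (sechSq l) (-2 * l * sinh (l * x) / cosh (l * x) ^ 3) x := by
  have hc := (cosh_pos (l * x)).ne'
  have h := (hasDerivAt_const x (1 : ℝ)).fun_div ((hasDerivAt_cosh_const_mul l x).fun_pow 2)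
    (pow_ne_zero 2 hc)
  rw [show sechSq l = fun y => 1 / cosh (l * y) ^ 2 by ext; simp [sechSq]]
  refine h.congr_deriv ?_
  field_simp
  ring

lemma deriv_eq : deriv (sechSq l) = fun x => -2 * l * sinh (l * x) / cosh (l * x) ^ 3 :=
  funext fun x => (hasDerivAt l x).deriv

lemma iteratedDeriv_two :
    iteratedDeriv 2 (sechSq l) = fun x => 4 * l ^ 2 * sechSq l x - 6 * l ^ 2 * sechSq l x ^ 2 := by
  rw [iteratedDeriv_succ, iteratedDeriv_one, deriv_eq]
  funext x
  have hc := (cosh_pos (l * x)).ne'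
  have h := ((hasDerivAt_sinh_const_mul l x).const_mul (-2 * l)).fun_div
    ((hasDerivAt_cosh_const_mul l x).fun_pow 3) (pow_ne_zero 3 hc)
  refine h.deriv.trans ?_
  simp only [sechSq]
  field_simp
  linear_combination (6 * l ^ 2 * cosh (l * x) ^ 2) * sinh_sq (l * x)

lemma iteratedDeriv_three (x : ℝ) :
    iteratedDeriv 3 (sechSq l) x = (4 * l ^ 2 - 12 * l ^ 2 * sechSq l x) * deriv (sechSq l) x := by
  have hS := (hasDerivAt l x).differentiableAt.hasDerivAt
  rw [iteratedDeriv_succ, iteratedDeriv_two]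
  refine (((hS.const_mul _).sub ((hS.fun_pow 2).const_mul _)).deriv).trans ?_
  ring

end sechSq

section Ansatz

variable {d k l : ℝ} {f g : ℝ → ℝ}

lemma deriv_of_eq_mul_sechSq (hf : ∀ x, f x = d * sechSq l x) (x : ℝ) :
    deriv f x = d * deriv (sechSq l) x := by
  rw [show f = (d * sechSq l ·) from funext hf, deriv_const_mul_field]

lemma iteratedDeriv_of_eq_mul_sechSq (hf : ∀ x, f x = d * sechSq l x) (n : ℕ) (x : ℝ) :
    iteratedDeriv n f x = d * iteratedDeriv n (sechSq l) x := by
  rw [show f = (d * sechSq l ·) from funext hf, iteratedDeriv_const_mul_field]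

lemma eq_mul_sechSq_of_eq_mul (hf : ∀ x, f x = d * sechSq l x) (hg : ∀ x, g x = k * f x)
    (x : ℝ) : g x = k * d * sechSq l x := by
  rw [hg, hf, mul_assoc]

lemma system_i_of_eq_mul_sechSq {a m : ℝ} (hf : ∀ x, f x = d * sechSq l x)
    (hg : ∀ x, g x = k * f x) (hkd : k * d = 6 * a * l ^ 2) (hm : m = -4 * a * l ^ 2) (x : ℝ) :
    deriv f x * g x + f x * deriv g x + a * iteratedDeriv 3 f x + m * deriv f x = 0 := by
  have hg' := eq_mul_sechSq_of_eq_mul hf hg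
  rw [deriv_of_eq_mul_sechSq hf, deriv_of_eq_mul_sechSq hg', iteratedDeriv_of_eq_mul_sechSq hf,
    sechSq.iteratedDeriv_three, hf, hg']
  linear_combination (2 * d * sechSq l x * deriv (sechSq l) x) * hkd + (d * deriv (sechSq l) x) * hm

lemma system_ii_of_eq_mul_sechSq {p q r : ℝ} (hf : ∀ x, f x = d * sechSq l x)
    (hg : ∀ x, g x = k * f x) (hp : p * (k * d) = 6 * q * l ^ 2) (hr : r = -4 * q * l ^ 2)
    (x : ℝ) : p * f x * g x + q * iteratedDeriv 2 f x + r * f x = 0 := by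
  rw [iteratedDeriv_of_eq_mul_sechSq hf, sechSq.iteratedDeriv_two, eq_mul_sechSq_of_eq_mul hf hg,
    hf]
  linear_combination (d * sechSq l x ^ 2) * hp + (d * sechSq l x) * hr

lemma system_iii_of_eq_mul_sechSq {c s : ℝ} (hf : ∀ x, f x = d * sechSq l x)
    (hg : ∀ x, g x = k * f x) (hkd : (1 + k ^ 2) * d = 12 * c * k * l ^ 2)
    (hs : s = -4 * c * l ^ 2) (x : ℝ) :
    f x * deriv f x + g x * deriv g x + c * iteratedDeriv 3 g x + s * deriv g x = 0 := by
  have hg' := eq_mul_sechSq_of_eq_mul hf hg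
  rw [deriv_of_eq_mul_sechSq hf, deriv_of_eq_mul_sechSq hg', iteratedDeriv_of_eq_mul_sechSq hg',
    sechSq.iteratedDeriv_three, hf, hg']
  linear_combination (d * sechSq l x * deriv (sechSq l) x) * hkd +
    (k * d * deriv (sechSq l) x) * hs

end Ansatz

end

theorem stmt_12_general
    (a0 c mu0 mu1 b : ℝ)
    (ha0 : 0 < a0)
    (ha0lt : a0 < 2*c) (hane : a0 ≠ c)
    (E : ℝ) (hE : E = 3*a0^2*mu1^2 - 2*a0*b*mu1 - 4*a0*mu0 - b^2 + 4*a0) (hEsgn : E * (a0 - c) > 0)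
    (σ B ω lam d2 : ℝ)
    (h_σ : σ = (4*a0^2 + 3*a0^2*c*mu1^2 - 2*a0*b*c*mu1 - 4*a0*c*mu0 - b^2*c)/(4*a0*(a0 - c)))
    (h_B : B = (a0*mu1 - b)/(2*a0))
    (h_ω : ω = -(a0*mu1^2 - b*mu1 - mu0 + σ)*mu1)
    (h_lam : lam = Real.sqrt (E/(16*a0*(a0 - c))))
    (h_d2 : d2 = 3*Real.sqrt (2*c - a0)*E/(8*Real.sqrt a0*(a0 - c)))
    (f g : ℝ → ℝ)
    (hfdef : ∀ ξ : ℝ, f ξ = d2 * (1/Real.cosh (lam*ξ))^2)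
    (hgdef : ∀ ξ : ℝ, g ξ = Real.sqrt (a0/(2*c - a0)) * f ξ) :
    ∀ ξ : ℝ,
      (deriv f ξ * g ξ + f ξ * deriv g ξ + a0 * iteratedDeriv 3 f ξ + (mu0 - σ - 3*a0*B^2 - 2*b*B) * deriv f ξ = 0) ∧
      ((B + mu1) * f ξ * g ξ + (3*a0*B + b) * iteratedDeriv 2 f ξ + (ω + B*mu0 - B*σ - a0*B^3 - b*B^2) * f ξ = 0) ∧
      (f ξ * deriv f ξ + g ξ * deriv g ξ + c * iteratedDeriv 3 g ξ + (1 - σ) * deriv g ξ = 0) := by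
  have h2c : 0 < 2 * c - a0 := by linarith
  have hac : a0 - c ≠ 0 := sub_ne_zero.mpr hane
  set k := Real.sqrt (a0 / (2 * c - a0))
  have hk : k ^ 2 * (2 * c - a0) = a0 := by
    rw [Real.sq_sqrt (by positivity)]; field_simp
  have hlam : lam ^ 2 = E / (16 * a0 * (a0 - c)) := by
    rw [h_lam, Real.sq_sqrt]
    rw [show E / (16 * a0 * (a0 - c)) = E * (a0 - c) / (16 * a0 * (a0 - c) ^ 2) by field_simp]
    positivity
  have hkd : k * d2 = 6 * a0 * lam ^ 2 := by
    have := Real.sqrt_pos.mpr ha0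
    have := Real.sqrt_pos.mpr h2c
    rw [show k = _ from Real.sqrt_div ha0.le (2 * c - a0), h_d2, hlam]
    field_simp
    ring
  have hσ : σ = 1 + 4 * c * lam ^ 2 := by rw [h_σ, hlam, hE]; field_simp; ring
  intro ξ
  refine ⟨system_i_of_eq_mul_sechSq hfdef hgdef hkd ?_ ξ,
    system_ii_of_eq_mul_sechSq hfdef hgdef ?_ ?_ ξ, system_iii_of_eq_mul_sechSq hfdef hgdef ?_ ?_ ξ⟩
  · rw [h_B, hσ, hlam, hE]; field_simp; ring
  · rw [hkd, h_B]; field_simp; ring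
  · rw [h_ω, h_B, hσ, hlam, hE]; field_simp; ring
  · -- after multiplication by `k` this is `k² (2c - a0) = a0`
    refine mul_left_cancel₀ (Real.sqrt_pos.mpr (div_pos ha0 h2c)).ne' ?_
    linear_combination (1 + k ^ 2) * hkd - 6 * lam ^ 2 * hk
  · rw [hσ]; ring

theorem stmt_12
    (a0 c mu0 mu1 b : ℝ)
    (ha0 : 0 < a0) (hc : 0 < c) (hmu0 : 0 < mu0) (hmu1 : 0 < mu1)
    (ha0lt : a0 < 2*c) (hane : a0 ≠ c)
    (E : ℝ) (hE : E = 3*a0^2*mu1^2 - 2*a0*b*mu1 - 4*a0*mu0 - b^2 + 4*a0) (hEsgn : E * (a0 - c) > 0)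
    (σ B ω lam d2 : ℝ)
    (h_σ : σ = (4*a0^2 + 3*a0^2*c*mu1^2 - 2*a0*b*c*mu1 - 4*a0*c*mu0 - b^2*c)/(4*a0*(a0 - c)))
    (h_B : B = (a0*mu1 - b)/(2*a0))
    (h_ω : ω = -(a0*mu1^2 - b*mu1 - mu0 + σ)*mu1)
    (h_lam : lam = Real.sqrt (E/(16*a0*(a0 - c))))
    (h_d2 : d2 = 3*Real.sqrt (2*c - a0)*E/(8*Real.sqrt a0*(a0 - c)))
    (hσpos : 0 < σ)
    (f g : ℝ → ℝ)
    (hfdef : ∀ ξ : ℝ, f ξ = d2 * (1/Real.cosh (lam*ξ))^2)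
    (hgdef : ∀ ξ : ℝ, g ξ = Real.sqrt (a0/(2*c - a0)) * f ξ) :
    ∀ ξ : ℝ,
      (deriv f ξ * g ξ + f ξ * deriv g ξ + a0 * iteratedDeriv 3 f ξ + (mu0 - σ - 3*a0*B^2 - 2*b*B) * deriv f ξ = 0) ∧
      ((B + mu1) * f ξ * g ξ + (3*a0*B + b) * iteratedDeriv 2 f ξ + (ω + B*mu0 - B*σ - a0*B^3 - b*B^2) * f ξ = 0) ∧
      (f ξ * deriv f ξ + g ξ * deriv g ξ + c * iteratedDeriv 3 g ξ + (1 - σ) * deriv g ξ = 0) :=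
  stmt_12_general a0 c mu0 mu1 b ha0 ha0lt hane E hE hEsgn σ B ω lam d2 h_σ h_B h_ω h_lam h_d2 f g
    hfdef hgdef
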